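/- Let X be a monotone convergence space. Then X equipped with its core compactly generated topology is again a monotone convergence space. -/

import Mathlib

open Set TopologicalSpace

universe u

section OrderDefs

variable {X : Type u}

/-- `U` is an upper set with respect to the relation `le`. -/
def IsUpperSetWrt (le : X → X → Prop) (U : Set X) : Prop :=
  ∀ ⦃x⦄, x ∈ U → ∀ ⦃y⦄, le x y → y ∈ U

/-- `s` is an upper bound of `D` with respect to `le`. -/
def IsUBWrt (le : X → X → Prop) (D : Set X) (s : X) : Prop := ∀ d ∈ D, le d s

/-- `s` is a least upper bound (supremum) of `D` with respect to `le`. -/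
def IsSupWrt (le : X → X → Prop) (D : Set X) (s : X) : Prop :=
  IsUBWrt le D s ∧ ∀ t, IsUBWrt le D t → le s t

/-- `D` is a (nonempty) directed subset with respect to `le`. -/
def DirectedSubset (le : X → X → Prop) (D : Set X) : Prop :=
  D.Nonempty ∧ ∀ a ∈ D, ∀ b ∈ D, ∃ c ∈ D, le a c ∧ le b c

/-- `U` is Scott open with respect to `le`: an upper set inaccessible by directed suprema. -/
def ScottOpenWrt (le : X → X → Prop) (U : Set X) : Prop :=
  IsUpperSetWrt le U ∧
    ∀ D, DirectedSubset le D → ∀ s, IsSupWrt le D s → s ∈ U → (D ∩ U).Nonempty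

/-- The Scott topology determined by the relation `le`. -/
def scottTop (le : X → X → Prop) : TopologicalSpace X where
  IsOpen := ScottOpenWrt le
  isOpen_univ := by
    refine ⟨fun x _ y _ => trivial, fun D hD s _ _ => ?_⟩
    obtain ⟨d, hd⟩ := hD.1
    exact ⟨d, hd, trivial⟩
  isOpen_inter := by
    rintro U V ⟨hUup, hUd⟩ ⟨hVup, hVd⟩
    refine ⟨fun x hx y hxy => ⟨hUup hx.1 hxy, hVup hx.2 hxy⟩, ?_⟩
    rintro D hD s hs ⟨hsU, hsV⟩
    obtain ⟨a, haD, haU⟩ := hUd D hD s hs hsU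
    obtain ⟨b, hbD, hbV⟩ := hVd D hD s hs hsV
    obtain ⟨c, hcD, hac, hbc⟩ := hD.2 a haD b hbD
    exact ⟨c, hcD, hUup haU hac, hVup hbV hbc⟩
  isOpen_sUnion := by
    intro S hS
    refine ⟨fun x hx y hxy => ?_, ?_⟩
    · obtain ⟨U, hU, hxU⟩ := hx
      exact ⟨U, hU, (hS U hU).1 hxU hxy⟩
    · rintro D hD s hs ⟨U, hU, hsU⟩
      obtain ⟨d, hdD, hdU⟩ := (hS U hU).2 D hD s hs hsU
      exact ⟨d, hdD, U, hU, hdU⟩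

end OrderDefs

section TopDefs

variable {X : Type u} [TopologicalSpace X]

/-- The specialization order of a topological space: `x ≤ y` iff `x ∈ cl {y}`. -/
def specLE (x y : X) : Prop := x ∈ closure ({y} : Set X)

/-- The upward closure of `A` in the specialization order. -/
def upSet (A : Set X) : Set X := {y | ∃ a ∈ A, specLE a y}

/-- `V` is way below `U`: every open cover of `U` admits a finite subfamily covering `V`. -/
def WayBelow (V U : Set X) : Prop :=
  ∀ S : Set (Set X), (∀ W ∈ S, IsOpen W) → U ⊆ ⋃₀ S →
    ∃ F : Finset (Set X), ↑F ⊆ S ∧ V ⊆ ⋃₀ (F : Set (Set X))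

/-- A space is core compact if its lattice of open sets is continuous, i.e. every open
set is the union of the open sets way below it. -/
def CoreCompact (X : Type u) [TopologicalSpace X] : Prop :=
  ∀ U : Set X, IsOpen U → ∀ x ∈ U, ∃ V : Set X, IsOpen V ∧ x ∈ V ∧ WayBelow V U

/-- `V` is open in the core compactly generated topology:
preimages under every continuous map from a core compact space are open. -/
def ccgOpen (X : Type u) [TopologicalSpace X] (V : Set X) : Prop :=
  ∀ (C : Type u) (tC : TopologicalSpace C), CoreCompact C →
    ∀ ρ : C → X, Continuous ρ → IsOpen (ρ ⁻¹' V)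

/-- The core compactly generated topology `𝒞X`. -/
def ccgTopology (X : Type u) [TopologicalSpace X] : TopologicalSpace X where
  IsOpen := ccgOpen X
  isOpen_univ := by intro C tC _ ρ hρ; simpa using isOpen_univ
  isOpen_inter := by
    intro U V hU hV C tC hc ρ hρ
    exact (hU C tC hc ρ hρ).inter (hV C tC hc ρ hρ)
  isOpen_sUnion := by
    intro S hS C tC hc ρ hρ
    rw [preimage_sUnion]
    exact isOpen_biUnion fun t ht => hS t ht C tC hc ρ hρ

/-- A space is core compactly generated if its topology coincides with the
core compactly generated topology. -/
def CCGenerated (X : Type u) [t : TopologicalSpace X] : Prop := ccgTopology X = t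

/-- A set is saturated if it is the intersection of the open sets containing it. -/
def Saturated (K : Set X) : Prop := K = ⋂₀ {U : Set X | IsOpen U ∧ K ⊆ U}

/-- A T₀ space is well-filtered if every filtered family of nonempty compact saturated sets
whose intersection is contained in an open set has a member contained in that open set. -/
def WellFiltered (X : Type u) [TopologicalSpace X] : Prop :=
  T0Space X ∧ ∀ 𝒦 : Set (Set X), 𝒦.Nonempty →
    (∀ K ∈ 𝒦, K.Nonempty ∧ IsCompact K ∧ Saturated K) →
    (∀ K₁ ∈ 𝒦, ∀ K₂ ∈ 𝒦, ∃ K₃ ∈ 𝒦, K₃ ⊆ K₁ ∧ K₃ ⊆ K₂) →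
    ∀ U : Set X, IsOpen U → ⋂₀ 𝒦 ⊆ U → ∃ K ∈ 𝒦, K ⊆ U

/-- A T₀ space is ω-well-filtered if the well-filteredness condition holds for
countable filtered families of nonempty compact saturated sets. -/
def OmegaWellFiltered (X : Type u) [TopologicalSpace X] : Prop :=
  T0Space X ∧ ∀ K : ℕ → Set X,
    (∀ n, (K n).Nonempty ∧ IsCompact (K n) ∧ Saturated (K n)) →
    (∀ m n, ∃ k, K k ⊆ K m ∧ K k ⊆ K n) →
    ∀ U : Set X, IsOpen U → (⋂ n, K n) ⊆ U → ∃ n, K n ⊆ U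

/-- A space is sober if it is T₀ and every irreducible closed set is the closure of a
(unique) point. -/
def SoberSpace (X : Type u) [TopologicalSpace X] : Prop :=
  T0Space X ∧ ∀ A : Set X, IsIrreducible A → IsClosed A → ∃! x : X, A = closure ({x} : Set X)

/-- A T₀ space is a monotone convergence space if the closure of every directed subset
(in the specialization order) is the closure of a point. -/
def MonotoneConvergenceSpace (X : Type u) [TopologicalSpace X] : Prop :=
  T0Space X ∧ ∀ D : Set X, DirectedSubset specLE D → ∃ x : X, closure D = closure ({x} : Set X)

/-- The hull-kernel style topology on a family of subsets of `X`, generated by the sets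
`U^s = {A | A ∩ U ≠ ∅}` for `U` open in `X`. -/
def hullTop (S : Set X → Prop) : TopologicalSpace {A : Set X // S A} :=
  generateFrom {s : Set {A : Set X // S A} |
    ∃ U : Set X, IsOpen U ∧ s = {A : {A : Set X // S A} | ((A : Set X) ∩ U).Nonempty}}

end TopDefs


/-!
`𝒞X` is finer than `X`, so it is T₀ and its closures are smaller. Conversely, if `D` is
directed and `x ∈ cl D` in `X`, equip `X` with the topology whose opens are the upper sets
that meet `D` as soon as they contain `x`. Directedness makes this a topology, it is coarser
than that of `X`, and it is core compact: a point `p` of an open `U` has the open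
neighbourhood `↑p ∪ ↑d`, for `d` a point of `U ∩ D` (or `d = p` when `x ∉ U`), which is way
below `U`. Every `𝒞X`-open set containing `x` is therefore open in it, hence meets `D`. So
directed sets, in particular singletons, have the same closure in `X` and in `𝒞X`.
-/

open Topology

section Specialization

variable {X : Type u} [TopologicalSpace X]

theorem specLE_iff_specializes {x y : X} : specLE x y ↔ y ⤳ x :=
  specializes_iff_mem_closure.symm

theorem specLE_refl (x : X) : specLE x x :=
  specLE_iff_specializes.mpr (specializes_refl x)

theorem specLE.trans {x y z : X} (hxy : specLE x y) (hyz : specLE y z) : specLE x z :=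
  specLE_iff_specializes.mpr
    ((specLE_iff_specializes.mp hyz).trans (specLE_iff_specializes.mp hxy))

theorem IsOpen.isUpperSetWrt_specLE {U : Set X} (hU : IsOpen U) : IsUpperSetWrt specLE U :=
  fun _ hx _ hxy => (specLE_iff_specializes.mp hxy).mem_open hU hx

theorem directedSubset_specLE_singleton (x : X) : DirectedSubset specLE {x} :=
  ⟨singleton_nonempty x, fun _ ha _ hb =>
    ⟨x, rfl, mem_singleton_iff.mp ha ▸ specLE_refl x, mem_singleton_iff.mp hb ▸ specLE_refl x⟩⟩

end Specialization

theorem wayBelow_of_isUpperSetWrt {C : Type u} [TopologicalSpace C] {le : C → C → Prop}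
    (hup : ∀ W : Set C, IsOpen W → IsUpperSetWrt le W) {F : Finset C} {U : Set C}
    (hFU : (F : Set C) ⊆ U) : WayBelow {y | ∃ a ∈ F, le a y} U := by
  intro S hS hUS
  choose! W hWS haW using fun a (ha : a ∈ F) => hUS (hFU ha)
  classical
  refine ⟨F.image W, by simpa [Set.subset_def] using hWS, ?_⟩
  rintro y ⟨a, ha, hay⟩
  exact ⟨W a, Finset.mem_image_of_mem W ha, hup _ (hS _ (hWS a ha)) (haW a ha) hay⟩

section Approach

variable {X : Type u} [TopologicalSpace X] {D : Set X}

def approachTopology (hD : DirectedSubset specLE D) (x : X) : TopologicalSpace X where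
  IsOpen U := IsUpperSetWrt specLE U ∧ (x ∈ U → (U ∩ D).Nonempty)
  isOpen_univ := ⟨fun _ _ _ _ => trivial, fun _ => by simpa using hD.1⟩
  isOpen_inter := by
    rintro U V ⟨hUup, hUx⟩ ⟨hVup, hVx⟩
    refine ⟨fun y hy z hyz => ⟨hUup hy.1 hyz, hVup hy.2 hyz⟩, fun hx => ?_⟩
    obtain ⟨a, haU, haD⟩ := hUx hx.1
    obtain ⟨b, hbV, hbD⟩ := hVx hx.2
    obtain ⟨c, hcD, hac, hbc⟩ := hD.2 a haD b hbD
    exact ⟨c, ⟨hUup haU hac, hVup hbV hbc⟩, hcD⟩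
  isOpen_sUnion := by
    intro S hS
    refine ⟨fun y ⟨U, hU, hyU⟩ z hyz => ⟨U, hU, (hS U hU).1 hyU hyz⟩, ?_⟩
    rintro ⟨U, hU, hxU⟩
    obtain ⟨d, hdU, hdD⟩ := (hS U hU).2 hxU
    exact ⟨d, ⟨U, hU, hdU⟩, hdD⟩

theorem approachTopology_le (hD : DirectedSubset specLE D) {x : X} (hx : x ∈ closure D) :
    approachTopology hD x ≤ ‹TopologicalSpace X› :=
  fun U hU => ⟨hU.isUpperSetWrt_specLE, fun hxU => mem_closure_iff.mp hx U hU hxU⟩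

theorem coreCompact_approachTopology (hD : DirectedSubset specLE D) (x : X) :
    @CoreCompact X (approachTopology hD x) := by
  rintro U ⟨hUup, hUx⟩ p hp
  obtain ⟨d, hdU, hdD⟩ : ∃ d ∈ U, x ∈ U → d ∈ D := by
    by_cases hx : x ∈ U
    · obtain ⟨d, hdU, hdD⟩ := hUx hx
      exact ⟨d, hdU, fun _ => hdD⟩
    · exact ⟨p, hp, fun h => absurd h hx⟩
  classical
  have hFU : (({p, d} : Finset X) : Set X) ⊆ U := by
    simp [Set.insert_subset_iff, hp, hdU]
  refine ⟨{y | ∃ a ∈ ({p, d} : Finset X), specLE a y}, ⟨?_, ?_⟩,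
    ⟨p, by simp, specLE_refl p⟩, @wayBelow_of_isUpperSetWrt X (approachTopology hD x) _
      (fun _ hW => hW.1) _ _ hFU⟩
  · rintro y ⟨a, ha, hay⟩ z hyz
    exact ⟨a, ha, hay.trans hyz⟩
  · rintro ⟨a, ha, hax⟩
    exact ⟨d, ⟨d, by simp, specLE_refl d⟩, hdD (hUup (hFU ha) hax)⟩

end Approach

section CoreCompactlyGenerated

variable {X : Type u} [TopologicalSpace X]

theorem ccgTopology_le : ccgTopology X ≤ ‹TopologicalSpace X› :=
  fun U hU _ _ _ _ hρ => hρ.isOpen_preimage U hU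

theorem t0Space_ccgTopology [T0Space X] : @T0Space X (ccgTopology X) :=
  @t0Space_of_injective_of_continuous X X (ccgTopology X) _ id Function.injective_id
    (continuous_id_of_le ccgTopology_le) _

theorem mem_closure_ccgTopology {D : Set X} (hD : DirectedSubset specLE D) {x : X}
    (hx : x ∈ closure D) : x ∈ closure[ccgTopology X] D := by
  rw [@mem_closure_iff X (ccgTopology X)]
  intro V hV hxV
  exact (hV X (approachTopology hD x) (coreCompact_approachTopology hD x) id
    (continuous_id_of_le (approachTopology_le hD hx))).2 hxV

theorem closure_ccgTopology {D : Set X} (hD : DirectedSubset specLE D) :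
    closure[ccgTopology X] D = closure D :=
  (closure.mono ccgTopology_le).antisymm fun _ hx => mem_closure_ccgTopology hD hx

theorem specLE_ccgTopology : @specLE X (ccgTopology X) = @specLE X _ := by
  ext x y
  exact Eq.to_iff (congrArg (x ∈ ·) (closure_ccgTopology (directedSubset_specLE_singleton y)))

end CoreCompactlyGenerated

/-- a monotone convergence space equipped with its core compactly generated
topology is again a monotone convergence space. -/
theorem stmt10 {X : Type u} [tX : TopologicalSpace X] (h : MonotoneConvergenceSpace X) :
    @MonotoneConvergenceSpace X (ccgTopology X) := by
  obtain ⟨hT0, hmc⟩ := h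
  refine ⟨t0Space_ccgTopology, fun D hD => ?_⟩
  rw [specLE_ccgTopology] at hD
  obtain ⟨x, hx⟩ := hmc D hD
  exact ⟨x, by rw [closure_ccgTopology hD,
    closure_ccgTopology (directedSubset_specLE_singleton x), hx]⟩
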